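/- arXiv:2603.29451 — 3 statements merged into one kernel-verified Lean document; each statement's English description precedes it below -/
import Mathlib

section
/- Let y : Fin k → [0,1] be nonnegative reals each at most 1, let Y := ∑ y_i, and let ε > 0 with 1/ε a positive integer and εY ≥ 1. Then there exists a partition of Fin k into consecutive intervals J_1, …, J_{1/ε} (in the given order of indices) such that for every ℓ, εY − 1 ≤ ∑_{i ∈ J_ℓ} y_i ≤ εY + 1. -/
/-- Fractional harmonic grouping: items `0, …, k-1` with weights `y i ∈ [0,1]`
summing to `Y` can be split into `m = 1/ε` consecutive groups, each of
fractional weight within `1` of `ε·Y`. -/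
theorem harmonic_grouping (k m : ℕ) (hm : 0 < m) (y : Fin k → ℝ)
    (hy0 : ∀ i, 0 ≤ y i) (hy1 : ∀ i, y i ≤ 1)
    (hY : 1 ≤ (1 / (m : ℝ)) * ∑ i, y i) :
    ∃ t : ℕ → ℕ, Monotone t ∧ t 0 = 0 ∧ t m = k ∧
      ∀ ℓ < m,
        (1 / (m : ℝ)) * (∑ i, y i) - 1 ≤
            ∑ i ∈ Finset.univ.filter (fun i : Fin k => t ℓ ≤ i.val ∧ i.val < t (ℓ + 1)), y i ∧
        ∑ i ∈ Finset.univ.filter (fun i : Fin k => t ℓ ≤ i.val ∧ i.val < t (ℓ + 1)), y i ≤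
            (1 / (m : ℝ)) * (∑ i, y i) + 1 := by
  classical
  set Y : ℝ := ∑ i, y i with hYdef
  set T : ℝ := (1 / (m : ℝ)) * Y with hTdef
  have hm' : (0 : ℝ) < m := by exact_mod_cast hm
  have hT1 : (1 : ℝ) ≤ T := hY
  have hT0 : (0 : ℝ) ≤ T := le_trans zero_le_one hT1
  have hmT : (m : ℝ) * T = Y := by
    rw [hTdef]; field_simp
  set S : ℕ → ℝ := fun n => ∑ i ∈ Finset.univ.filter (fun i : Fin k => i.val < n), y i
    with hSdef
  have hS0 : S 0 = 0 := by simp [hSdef]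
  have hSk : S k = Y := by
    rw [hSdef, hYdef]
    simp only
    rw [Finset.filter_true_of_mem (fun i _ => i.isLt)]
  have hSmono : Monotone S := by
    intro a b hab
    apply Finset.sum_le_sum_of_subset_of_nonneg
    · intro i hi
      simp only [Finset.mem_filter, Finset.mem_univ, true_and] at hi ⊢
      omega
    · intro i _ _; exact hy0 i
  have hstep : ∀ n, S (n + 1) ≤ S n + 1 := by
    intro n
    by_cases hn : n < k
    · have heq : Finset.univ.filter (fun i : Fin k => i.val < n + 1)
          = insert (⟨n, hn⟩ : Fin k) (Finset.univ.filter (fun i : Fin k => i.val < n)) := by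
        ext i
        simp only [Finset.mem_filter, Finset.mem_univ, true_and, Finset.mem_insert,
          Fin.ext_iff]
        omega
      have : S (n + 1) = y ⟨n, hn⟩ + S n := by
        rw [hSdef]; simp only
        rw [heq, Finset.sum_insert (by simp)]
      rw [this]
      have := hy1 (⟨n, hn⟩ : Fin k)
      linarith
    · have heq : Finset.univ.filter (fun i : Fin k => i.val < n + 1)
          = Finset.univ.filter (fun i : Fin k => i.val < n) := by
        ext i
        simp only [Finset.mem_filter, Finset.mem_univ, true_and]
        omega
      have : S (n + 1) = S n := by rw [hSdef]; simp only [heq]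
      linarith
  have ex : ∀ ℓ : ℕ, ℓ ≤ m → ∃ n, (ℓ : ℝ) * T ≤ S n := by
    intro ℓ hl
    refine ⟨k, ?_⟩
    rw [hSk, ← hmT]
    exact mul_le_mul_of_nonneg_right (by exact_mod_cast hl) hT0
  set t : ℕ → ℕ := fun ℓ => if hl : ℓ < m then Nat.find (ex ℓ hl.le) else k with htdef
  have htlt : ∀ ℓ (hl : ℓ < m), t ℓ = Nat.find (ex ℓ hl.le) := by
    intro ℓ hl; rw [htdef]; simp [hl]
  have htge : ∀ ℓ, m ≤ ℓ → t ℓ = k := by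
    intro ℓ hl; rw [htdef]; simp [Nat.not_lt.mpr hl]
  have htk : ∀ ℓ, t ℓ ≤ k := by
    intro ℓ
    by_cases hl : ℓ < m
    · rw [htlt ℓ hl]
      apply Nat.find_le
      rw [hSk, ← hmT]
      exact mul_le_mul_of_nonneg_right (by exact_mod_cast hl.le) hT0
    · exact le_of_eq (htge ℓ (Nat.not_lt.mp hl))
  have hlow : ∀ ℓ, ℓ ≤ m → (ℓ : ℝ) * T ≤ S (t ℓ) := by
    intro ℓ hl
    by_cases h : ℓ < m
    · rw [htlt ℓ h]; exact Nat.find_spec (ex ℓ h.le)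
    · have hem : ℓ = m := le_antisymm hl (Nat.not_lt.mp h)
      subst hem
      rw [htge ℓ le_rfl, hSk, hmT]
  have hupp : ∀ ℓ, ℓ ≤ m → S (t ℓ) ≤ (ℓ : ℝ) * T + 1 := by
    intro ℓ hl
    by_cases h : ℓ < m
    · rw [htlt ℓ h]
      rcases Nat.eq_zero_or_pos (Nat.find (ex ℓ h.le)) with h0 | h0
      · rw [h0, hS0]
        positivity
      · obtain ⟨p, hp⟩ := Nat.exists_eq_succ_of_ne_zero h0.ne'
        have hmin : ¬ ((ℓ : ℝ) * T ≤ S p) := Nat.find_min (ex ℓ h.le) (by omega)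
        push_neg at hmin
        have := hstep p
        rw [hp]
        linarith
    · have hem : ℓ = m := le_antisymm hl (Nat.not_lt.mp h)
      subst hem
      rw [htge ℓ le_rfl, hSk, hmT]
      linarith
  have hmono : Monotone t := by
    intro a b hab
    by_cases hb : b < m
    · have ha : a < m := lt_of_le_of_lt hab hb
      rw [htlt a ha, htlt b hb]
      apply Nat.find_le
      calc (a : ℝ) * T ≤ (b : ℝ) * T :=
            mul_le_mul_of_nonneg_right (by exact_mod_cast hab) hT0
        _ ≤ S (Nat.find (ex b hb.le)) := Nat.find_spec (ex b hb.le)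
    · rw [htge b (Nat.not_lt.mp hb)]
      exact htk a
  have hsplit : ∀ a b : ℕ, a ≤ b →
      ∑ i ∈ Finset.univ.filter (fun i : Fin k => a ≤ i.val ∧ i.val < b), y i
        = S b - S a := by
    intro a b hab
    have heq : Finset.univ.filter (fun i : Fin k => i.val < b)
        = Finset.univ.filter (fun i : Fin k => i.val < a)
          ∪ Finset.univ.filter (fun i : Fin k => a ≤ i.val ∧ i.val < b) := by
      ext i
      simp only [Finset.mem_filter, Finset.mem_univ, true_and, Finset.mem_union]
      omega
    have hdisj : Disjoint (Finset.univ.filter (fun i : Fin k => i.val < a))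
        (Finset.univ.filter (fun i : Fin k => a ≤ i.val ∧ i.val < b)) := by
      rw [Finset.disjoint_left]
      intro i hi hi'
      simp only [Finset.mem_filter, Finset.mem_univ, true_and] at hi hi'
      omega
    have : S b = S a + ∑ i ∈ Finset.univ.filter
        (fun i : Fin k => a ≤ i.val ∧ i.val < b), y i := by
      rw [hSdef]; simp only
      rw [heq, Finset.sum_union hdisj]
    linarith
  refine ⟨t, hmono, ?_, htge m le_rfl, ?_⟩
  · rw [htlt 0 hm]
    refine Nat.eq_zero_of_le_zero (Nat.find_le ?_)
    rw [hS0]; simp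
  · intro ℓ hℓ
    have h1 : ℓ + 1 ≤ m := hℓ
    rw [hsplit (t ℓ) (t (ℓ + 1)) (hmono (Nat.le_succ ℓ))]
    have hl1 := hlow (ℓ + 1) h1
    have hl2 := hupp ℓ hℓ.le
    have hl3 := hupp (ℓ + 1) h1
    have hl4 := hlow ℓ hℓ.le
    push_cast at hl1 hl3
    constructor <;> [skip; skip] <;> · rw [hTdef] at hl1 hl2 hl3 hl4 ⊢; linarith
end

section
/- Let jobs j ∈ F each have a release time r_j, a processing time p_j > 0, and suppose every j ∈ F satisfies s < r_j and ∑_{j' ∈ F : r_j ≤ r_{j'}} p_{j'} ≤ t − r_j for every j ∈ F, where s < t. Order F non-decreasingly by release time and schedule the jobs consecutively without idle time so that the last job finishes exactly at time t. Then every job j ∈ F starts at or after its release time r_j. -/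
/-- Feasibility of the right-aligned greedy schedule: jobs `0, …, n-1`, ordered by
non-decreasing release times, are packed back-to-back ending at time `t`; the load
condition guarantees every job starts at or after its release time. -/
theorem right_aligned_schedule_feasible (n : ℕ) (r pr : Fin n → ℝ) (s t : ℝ)
    (hst : s < t) (hp : ∀ j, 0 < pr j) (hr : ∀ j, s < r j)
    (hmono : Monotone r)
    (hload : ∀ j, ∑ j' ∈ Finset.univ.filter (fun j' => r j ≤ r j'), pr j' ≤ t - r j) :
    ∀ j, r j ≤ t - ∑ j' ∈ Finset.Ici j, pr j' := by
  intro j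
  have hsub : Finset.Ici j ⊆ Finset.univ.filter (fun j' => r j ≤ r j') := by
    intro x hx
    simp only [Finset.mem_filter, Finset.mem_univ, true_and]
    exact hmono (Finset.mem_Ici.mp hx)
  have h1 : ∑ j' ∈ Finset.Ici j, pr j' ≤
      ∑ j' ∈ Finset.univ.filter (fun j' => r j ≤ r j'), pr j' :=
    Finset.sum_le_sum_of_subset_of_nonneg hsub (fun x _ _ => (hp x).le)
  linarith [hload j]
end

section
/- Suppose a randomized algorithm produces a solution of expected value at least (3/4)·V + (1/4)·V_s where V = ∑_{j} y_j and V_s = ∑_{j local} y_j, and another algorithm produces a solution of expected value at least V − V_s, where V ≥ (1−δ)·OPT for OPT > 0, 0 ≤ V_s ≤ V, and δ ∈ [0,1). Then max((3/4)V + (1/4)V_s, V − V_s) ≥ (4/5)·(1−δ)·OPT. -/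
theorem combine_two_algorithms (V Vs OPT δ : ℝ) (hOPT : 0 < OPT)
    (hδ0 : 0 ≤ δ) (hδ1 : δ < 1) (hVs0 : 0 ≤ Vs) (hVsV : Vs ≤ V)
    (hV : (1 - δ) * OPT ≤ V) :
    (4 / 5) * ((1 - δ) * OPT) ≤ max ((3 / 4) * V + (1 / 4) * Vs) (V - Vs) := by
  rcases le_or_gt (V / 5) Vs with h | h
  · exact le_trans (by linarith) (le_max_left _ _)
  · exact le_trans (by linarith) (le_max_right _ _)
end
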